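/- Let G be a finite simple graph and a any vertex of G. Then for all vertices v, w: v and w are foliage-equivalent in G if and only if v and w are foliage-equivalent in the local complement τ_a(G). Consequently, the canonical foliage partition (the partition of the vertex set into foliage-equivalence classes) is invariant under local complementation, and hence under LC-equivalence. -/

import Mathlib

variable {V : Type*}

/-- Local complementation `τ_a(G)`: toggle every edge between distinct neighbors of `a`. -/
def lcomp (G : SimpleGraph V) (a : V) : SimpleGraph V where
  Adj x y := (G.Adj x y ∧ ¬(x ≠ y ∧ G.Adj a x ∧ G.Adj a y)) ∨
             ((x ≠ y ∧ G.Adj a x ∧ G.Adj a y) ∧ ¬ G.Adj x y)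
  symm := by
    constructor
    rintro x y (⟨h1, h2⟩ | ⟨⟨hne, hx, hy⟩, h2⟩)
    · exact Or.inl ⟨h1.symm, fun h => h2 ⟨h.1.symm, h.2.2, h.2.1⟩⟩
    · exact Or.inr ⟨⟨hne.symm, hy, hx⟩, fun h => h2 h.symm⟩
  loopless := by
    constructor
    rintro x (⟨h1, _⟩ | ⟨⟨hne, _, _⟩, _⟩)
    · exact G.irrefl h1
    · exact hne rfl

/-- `(l, a)` is a leaf-axil pair: `l` has degree 1 and its unique neighbor is `a`. -/
def IsLeafAxil (G : SimpleGraph V) (l a : V) : Prop :=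
  G.Adj l a ∧ ∀ x, G.Adj l x → x = a

/-- `v` and `w` are twins: `N_v \ {w} = N_w \ {v} ≠ ∅`. -/
def IsTwin (G : SimpleGraph V) (v w : V) : Prop :=
  v ≠ w ∧ G.neighborSet v \ {w} = G.neighborSet w \ {v} ∧
    (G.neighborSet v \ {w}).Nonempty

/-- Foliage equivalence `v ∼_F w`. -/
def FoliageEq (G : SimpleGraph V) (v w : V) : Prop :=
  v = w ∨ IsLeafAxil G v w ∨ IsLeafAxil G w v ∨ IsTwin G v w

/-!
`τ_a` only changes adjacencies between two neighbours of `a`, and it is an involution, so it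
suffices to show that `τ_a` preserves `∼_F`. A pair with no member adjacent to `a` keeps its
neighbourhoods, and twins both adjacent to `a` stay twins because their neighbourhoods are
complemented within the same set `N_a`. A leaf adjacent to `a` has axil `a` and becomes a twin
of `a`, unless it is the only neighbour of `a`; conversely, a twin of `a` adjacent to `a` loses
all its neighbours but `a` and becomes a leaf with axil `a`.
-/

section LocalComplement

variable {G : SimpleGraph V} {a x y : V}

theorem lcomp_adj :
    (lcomp G a).Adj x y ↔ (G.Adj x y ∧ ¬(x ≠ y ∧ G.Adj a x ∧ G.Adj a y)) ∨
      ((x ≠ y ∧ G.Adj a x ∧ G.Adj a y) ∧ ¬ G.Adj x y) := Iff.rfl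

theorem lcomp_adj_of_not_adj_left (hx : ¬ G.Adj a x) : (lcomp G a).Adj x y ↔ G.Adj x y := by
  rw [lcomp_adj]; tauto

theorem lcomp_adj_of_not_adj_right (hy : ¬ G.Adj a y) : (lcomp G a).Adj x y ↔ G.Adj x y := by
  rw [lcomp_adj]; tauto

theorem lcomp_adj_of_adj_of_adj (hxy : x ≠ y) (hx : G.Adj a x) (hy : G.Adj a y) :
    (lcomp G a).Adj x y ↔ ¬ G.Adj x y := by
  rw [lcomp_adj]; tauto

theorem lcomp_adj_self_left : (lcomp G a).Adj a y ↔ G.Adj a y :=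
  lcomp_adj_of_not_adj_left G.irrefl

theorem lcomp_adj_self_right : (lcomp G a).Adj x a ↔ G.Adj x a :=
  lcomp_adj_of_not_adj_right G.irrefl

theorem neighborSet_lcomp_of_not_adj (hx : ¬ G.Adj a x) :
    (lcomp G a).neighborSet x = G.neighborSet x :=
  Set.ext fun _ => lcomp_adj_of_not_adj_left hx

theorem lcomp_lcomp : lcomp (lcomp G a) a = G := by
  ext x y
  rw [lcomp_adj, lcomp_adj_self_left, lcomp_adj_self_left, lcomp_adj]
  by_cases hxy : x = y
  · subst hxy; simp
  · tauto

end LocalComplement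

section Foliage

variable {G H : SimpleGraph V} {a b l u v w x : V}

theorem isTwin_iff : IsTwin G v w ↔
    v ≠ w ∧ (∀ x, x ≠ v → x ≠ w → (G.Adj v x ↔ G.Adj w x)) ∧ ∃ x, G.Adj v x ∧ x ≠ w := by
  simp only [IsTwin, Set.ext_iff, Set.Nonempty, Set.mem_sdiff, SimpleGraph.mem_neighborSet,
    Set.mem_singleton_iff]
  refine and_congr_right fun _ => and_congr_left fun _ => ⟨fun h x hxv hxw => ?_, fun h x => ?_⟩
  · simpa [hxv, hxw] using h x
  · by_cases hxv : x = v
    · subst hxv; simp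
    by_cases hxw : x = w
    · subst hxw; simp
    simpa [hxv, hxw] using h x hxv hxw

theorem IsTwin.adj_iff_adj (h : IsTwin G v w) (hxv : x ≠ v) (hxw : x ≠ w) :
    G.Adj v x ↔ G.Adj w x :=
  (isTwin_iff.mp h).2.1 x hxv hxw

theorem IsTwin.symm (h : IsTwin G v w) : IsTwin G w v :=
  ⟨h.1.symm, h.2.1.symm, h.2.1 ▸ h.2.2⟩

theorem FoliageEq.symm (h : FoliageEq G v w) : FoliageEq G w v := by
  rcases h with rfl | h | h | h
  · exact Or.inl rfl
  · exact Or.inr (Or.inr (Or.inl h))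
  · exact Or.inr (Or.inl h)
  · exact Or.inr (Or.inr (Or.inr h.symm))

theorem isLeafAxil_congr (hl : H.neighborSet l = G.neighborSet l) :
    IsLeafAxil H l b ↔ IsLeafAxil G l b := by
  simp only [IsLeafAxil, ← SimpleGraph.mem_neighborSet, hl]

theorem isTwin_congr (hv : H.neighborSet v = G.neighborSet v)
    (hw : H.neighborSet w = G.neighborSet w) : IsTwin H v w ↔ IsTwin G v w := by
  rw [IsTwin, IsTwin, hv, hw]

theorem IsLeafAxil.lcomp_of_not_adj (h : IsLeafAxil G l b) (hal : ¬ G.Adj a l) :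
    IsLeafAxil (lcomp G a) l b :=
  (isLeafAxil_congr (neighborSet_lcomp_of_not_adj hal)).mpr h

theorem IsLeafAxil.lcomp_of_forall_adj_eq (h : IsLeafAxil G l a) (ha : ∀ x, G.Adj a x → x = l) :
    IsLeafAxil (lcomp G a) l a := by
  refine ⟨lcomp_adj_self_right.mpr h.1, fun x hx => ?_⟩
  by_cases hax : G.Adj a x
  · exact absurd (ha x hax ▸ hx) (lcomp G a).irrefl
  · exact h.2 x ((lcomp_adj_of_not_adj_right hax).mp hx)

theorem IsLeafAxil.isTwin_lcomp (h : IsLeafAxil G l a) (hau : G.Adj a u) (hul : u ≠ l) :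
    IsTwin (lcomp G a) l a := by
  have hal : G.Adj a l := h.1.symm
  refine isTwin_iff.mpr ⟨hal.ne', fun x hxl hxa => ?_, u, ?_, hau.ne'⟩
  · rw [lcomp_adj_self_left]
    by_cases hax : G.Adj a x
    · simp only [hax, iff_true, lcomp_adj_of_adj_of_adj hxl.symm hal hax]
      exact fun hlx => hxa (h.2 x hlx)
    · simp only [hax, iff_false, lcomp_adj_of_not_adj_right hax]
      exact fun hlx => hxa (h.2 x hlx)
  · rw [lcomp_adj_of_adj_of_adj hul.symm hal hau]
    exact fun hlu => hau.ne' (h.2 u hlu)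

theorem IsLeafAxil.foliageEq_lcomp (h : IsLeafAxil G l b) : FoliageEq (lcomp G a) l b := by
  by_cases hal : G.Adj a l
  · obtain rfl : a = b := h.2 a hal.symm
    by_cases hu : ∃ u, G.Adj a u ∧ u ≠ l
    · obtain ⟨u, hau, hul⟩ := hu
      exact Or.inr (Or.inr (Or.inr (h.isTwin_lcomp hau hul)))
    · push Not at hu
      exact Or.inr (Or.inl (h.lcomp_of_forall_adj_eq hu))
  · exact Or.inr (Or.inl (h.lcomp_of_not_adj hal))

theorem IsTwin.lcomp_of_not_adj (h : IsTwin G v w) (hv : ¬ G.Adj a v) (hw : ¬ G.Adj a w) :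
    IsTwin (lcomp G a) v w :=
  (isTwin_congr (neighborSet_lcomp_of_not_adj hv) (neighborSet_lcomp_of_not_adj hw)).mpr h

theorem IsTwin.lcomp_of_adj_of_adj (h : IsTwin G v w) (hv : G.Adj a v) (hw : G.Adj a w) :
    IsTwin (lcomp G a) v w := by
  refine isTwin_iff.mpr ⟨h.1, fun x hxv hxw => ?_, a, lcomp_adj_self_right.mpr hv.symm, hw.ne⟩
  by_cases hax : G.Adj a x
  · rw [lcomp_adj_of_adj_of_adj hxv.symm hv hax, lcomp_adj_of_adj_of_adj hxw.symm hw hax,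
      h.adj_iff_adj hxv hxw]
  · rw [lcomp_adj_of_not_adj_right hax, lcomp_adj_of_not_adj_right hax, h.adj_iff_adj hxv hxw]

theorem IsTwin.isLeafAxil_lcomp (h : IsTwin G a w) (haw : G.Adj a w) :
    IsLeafAxil (lcomp G a) w a := by
  refine ⟨lcomp_adj_self_right.mpr haw.symm, fun x hx => ?_⟩
  by_contra hxa
  have hxw : x ≠ w := by rintro rfl; exact (lcomp G a).irrefl hx
  by_cases hax : G.Adj a x
  · exact (lcomp_adj_of_adj_of_adj hxw.symm haw hax).mp hx ((h.adj_iff_adj hxa hxw).mp hax)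
  · exact hax ((h.adj_iff_adj hxa hxw).mpr ((lcomp_adj_of_not_adj_right hax).mp hx))

theorem IsTwin.foliageEq_lcomp (h : IsTwin G v w) : FoliageEq (lcomp G a) v w := by
  have eq_of_adj_of_not_adj : ∀ {v w}, IsTwin G v w → G.Adj a v → ¬ G.Adj a w → a = w :=
    fun h hv hw => by_contra fun haw => hw ((h.adj_iff_adj hv.ne haw).mp hv.symm).symm
  by_cases hv : G.Adj a v <;> by_cases hw : G.Adj a w
  · exact Or.inr (Or.inr (Or.inr (h.lcomp_of_adj_of_adj hv hw)))
  · obtain rfl := eq_of_adj_of_not_adj h hv hw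
    exact Or.inr (Or.inl (h.symm.isLeafAxil_lcomp hv))
  · obtain rfl := eq_of_adj_of_not_adj h.symm hw hv
    exact Or.inr (Or.inr (Or.inl (h.isLeafAxil_lcomp hw)))
  · exact Or.inr (Or.inr (Or.inr (h.lcomp_of_not_adj hv hw)))

theorem FoliageEq.lcomp (h : FoliageEq G v w) : FoliageEq (lcomp G a) v w := by
  rcases h with rfl | h | h | h
  · exact Or.inl rfl
  · exact h.foliageEq_lcomp
  · exact h.foliageEq_lcomp.symm
  · exact h.foliageEq_lcomp

theorem foliageEq_lcomp_iff : FoliageEq (lcomp G a) v w ↔ FoliageEq G v w :=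
  ⟨fun h => lcomp_lcomp (G := G) (a := a) ▸ h.lcomp, FoliageEq.lcomp⟩

end Foliage

theorem foliageEq_lc_invariant_general {V : Type*} (G : SimpleGraph V) (a : V) :
    (∀ v w : V, FoliageEq G v w ↔ FoliageEq (lcomp G a) v w) ∧
    (∀ v : V, {w | FoliageEq G v w} = {w | FoliageEq (lcomp G a) v w}) :=
  ⟨fun _ _ => foliageEq_lcomp_iff.symm, fun _ => Set.ext fun _ => foliageEq_lcomp_iff.symm⟩

/-- foliage-equivalence, and hence the canonical foliage partition
(the foliage-equivalence classes), is invariant under local complementation. -/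
theorem foliageEq_lc_invariant {V : Type*} [Fintype V] (G : SimpleGraph V) (a : V) :
    (∀ v w : V, FoliageEq G v w ↔ FoliageEq (lcomp G a) v w) ∧
    (∀ v : V, {w | FoliageEq G v w} = {w | FoliageEq (lcomp G a) v w}) :=
  foliageEq_lc_invariant_general G a
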